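/- If Q ~ Uniform(-1,1) and Q̃ = sign(Q) - Q, then the pair (Q, Q̃) has the same joint distribution as the swapped pair (Q̃, Q). -/

import Mathlib

open MeasureTheory
open scoped ENNReal

/-!
On each half of `(-1, 1) \ {0}` the knockoff map `κ q = sign q - q` is the reflection
`q ↦ 1 - q` or `q ↦ -1 - q`, which maps that half onto itself. Hence `κ` preserves the uniform law
and is almost surely an involution, so `(Q̃, Q) = (κ Q, κ (κ Q))` is the image of `(Q, κ Q)` under
the law-preserving substitution `Q ↦ κ Q`.
-/

theorem Real.measurable_sign : Measurable Real.sign :=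
  Measurable.ite measurableSet_Iio measurable_const
    (Measurable.ite measurableSet_Ioi measurable_const measurable_const)

namespace MeasureTheory

theorem map_prodMk_eq_map_swap_of_involutive {α : Type*} [MeasurableSpace α] {ν : Measure α}
    {κ : α → α} (hκ : MeasurePreserving κ ν ν) (hinv : ∀ᵐ x ∂ν, κ (κ x) = x) :
    ν.map (fun x => (x, κ x)) = ν.map (fun x => (κ x, x)) :=
  calc ν.map (fun x => (x, κ x))
      = (ν.map κ).map (fun x => (x, κ x)) := by rw [hκ.map_eq]
    _ = ν.map (fun x => (κ x, κ (κ x))) :=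
      Measure.map_map (measurable_id'.prodMk hκ.measurable) hκ.measurable
    _ = ν.map (fun x => (κ x, x)) := Measure.map_congr (hinv.mono fun _ hx => Prod.ext rfl hx)

theorem map_restrict_Ioo_of_eqOn_reflection {f : ℝ → ℝ} {a b : ℝ}
    (hf : Set.EqOn f (fun x => a + b - x) (Set.Ioo a b)) :
    (volume.restrict (Set.Ioo a b)).map f = volume.restrict (Set.Ioo a b) := by
  have hpre : (fun x => a + b - x) ⁻¹' Set.Ioo a b = Set.Ioo a b := by
    simp [Set.preimage_const_sub_Ioo]
  rw [Measure.map_congr (hf.aeEq_restrict measurableSet_Ioo)]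
  have hreflect := ((volume.measurePreserving_sub_left (a + b)).restrict_preimage
    (s := Set.Ioo a b) measurableSet_Ioo).map_eq
  rwa [hpre] at hreflect

theorem restrict_Ioo_eq_add {μ : Measure ℝ} [NullSingletonClass μ] {a b c : ℝ} (hab : a ≤ b)
    (hbc : b < c) :
    μ.restrict (Set.Ioo a c) = μ.restrict (Set.Ioo a b) + μ.restrict (Set.Ioo b c) := by
  have hdisj : Disjoint (Set.Ioc a b) (Set.Ioo b c) :=
    (Set.Iic_disjoint_Ioi le_rfl).mono Set.Ioc_subset_Iic_self Set.Ioo_subset_Ioi_self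
  rw [← Set.Ioc_union_Ioo_eq_Ioo hab hbc, Measure.restrict_union hdisj measurableSet_Ioo,
    ← Measure.restrict_congr_set (Ioo_ae_eq_Ioc (a := a) (b := b))]

end MeasureTheory

noncomputable def knockoff (q : ℝ) : ℝ := Real.sign q - q

theorem measurable_knockoff : Measurable knockoff :=
  Real.measurable_sign.sub measurable_id

theorem knockoff_knockoff {q : ℝ} (hq : q ∈ Set.Ioo (-1) 1) (h0 : q ≠ 0) :
    knockoff (knockoff q) = q := by
  rcases h0.lt_or_gt with hneg | hpos
  · have : knockoff q < 0 := by rw [knockoff, Real.sign_of_neg hneg]; linarith [hq.1]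
    rw [knockoff, Real.sign_of_neg this, knockoff, Real.sign_of_neg hneg]
    ring
  · have : 0 < knockoff q := by rw [knockoff, Real.sign_of_pos hpos]; linarith [hq.2]
    rw [knockoff, Real.sign_of_pos this, knockoff, Real.sign_of_pos hpos]
    ring

theorem ae_knockoff_knockoff :
    ∀ᵐ q ∂volume.restrict (Set.Ioo (-1 : ℝ) 1), knockoff (knockoff q) = q := by
  filter_upwards [ae_restrict_mem measurableSet_Ioo, ae_restrict_of_ae (Measure.ae_ne volume 0)]
    with q hq h0
  exact knockoff_knockoff hq h0

theorem measurePreserving_knockoff :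
    MeasurePreserving knockoff (volume.restrict (Set.Ioo (-1 : ℝ) 1))
      (volume.restrict (Set.Ioo (-1 : ℝ) 1)) := by
  refine ⟨measurable_knockoff, ?_⟩
  have hneg : Set.EqOn knockoff (fun q => -1 + 0 - q) (Set.Ioo (-1) 0) := fun q hq => by
    simp only [knockoff, Real.sign_of_neg hq.2, add_zero]
  have hpos : Set.EqOn knockoff (fun q => 0 + 1 - q) (Set.Ioo 0 1) := fun q hq => by
    simp only [knockoff, Real.sign_of_pos hq.1, zero_add]
  rw [restrict_Ioo_eq_add (by norm_num) zero_lt_one, Measure.map_add _ _ measurable_knockoff,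
    map_restrict_Ioo_of_eqOn_reflection hneg, map_restrict_Ioo_of_eqOn_reflection hpos]

theorem stmt_8_general {Ω : Type*} [MeasurableSpace Ω] (μ : Measure Ω)
    (Q : Ω → ℝ) (hQ : Measurable Q)
    (hQUnif : Measure.map Q μ = (2 : ℝ≥0∞)⁻¹ • volume.restrict (Set.Ioo (-1 : ℝ) 1)) :
    Measure.map (fun ω => (Q ω, Real.sign (Q ω) - Q ω)) μ
      = Measure.map (fun ω => (Real.sign (Q ω) - Q ω, Q ω)) μ := by
  have hpreserve : MeasurePreserving knockoff (μ.map Q) (μ.map Q) :=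
    hQUnif ▸ measurePreserving_knockoff.smul_measure _
  have hinv : ∀ᵐ q ∂μ.map Q, knockoff (knockoff q) = q :=
    hQUnif ▸ Measure.ae_smul_measure ae_knockoff_knockoff _
  have hlaw := map_prodMk_eq_map_swap_of_involutive hpreserve hinv
  rwa [Measure.map_map (measurable_id'.prodMk measurable_knockoff) hQ,
    Measure.map_map (measurable_knockoff.prodMk measurable_id') hQ] at hlaw

/-- If `Q ~ Uniform(-1,1)` and `Q̃ = sign(Q) - Q`, then `(Q, Q̃)` has the same joint
distribution as the swapped pair `(Q̃, Q)`. -/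
theorem stmt_8 {Ω : Type*} [MeasurableSpace Ω] (μ : Measure Ω) [IsProbabilityMeasure μ]
    (Q : Ω → ℝ) (hQ : Measurable Q)
    (hQUnif : Measure.map Q μ = (2 : ℝ≥0∞)⁻¹ • volume.restrict (Set.Ioo (-1 : ℝ) 1)) :
    Measure.map (fun ω => (Q ω, Real.sign (Q ω) - Q ω)) μ
      = Measure.map (fun ω => (Real.sign (Q ω) - Q ω, Q ω)) μ :=
  stmt_8_general μ Q hQ hQUnif
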